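/- Risk invariance of the concrete spectral representation: let T be a positive natural number, Y a measurable space of labels, D a measure on (ZMod T → ℝ) × Y, and μ a probability measure on ZMod T × {λ : ℝ // 0 < λ} (time shift and positive gain). Define the feature map Φ : (ZMod T → ℝ) → (ZMod T → ℝ) by Φ(z)(r) = |dft(N(z))(r)|, and the action act (t, λ) z = λ • τ_t z. Then for any g : (ZMod T → ℝ) × Y → ℝ≥0∞ such that (z,y) ↦ g(Φ(z), y) is almost-everywhere measurable with respect to D, ∫⁻_{((z,y),(t,λ))} g(Φ(act (t,λ) z), y) d(D ⊗ μ) = ∫⁻_{(z,y)} g(Φ(z), y) dD. -/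

import Mathlib

/-!
Normalization removes the positive gain and commutes with the circular shift, and shifting a
signal multiplies its discrete Fourier transform by a value of the standard additive character,
which has modulus one; hence `Phi (act p z) = Phi z`. The integrand then depends only on the first
factor of `D ⊗ μ`, whose first projection pushes it forward to `D` because `μ` has mass one.
-/

open scoped BigOperators
open MeasureTheory

/-- Discrete Fourier transform of a signal `z : ZMod T → ℂ`:
`dft z r = ∑ n, z n · exp(−2πi·r·n/T)` with canonical representatives. -/
noncomputable def dft {T : ℕ} [NeZero T] (z : ZMod T → ℂ) (r : ZMod T) : ℂ :=
  ∑ n : ZMod T,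
    z n * Complex.exp (-(2 * Real.pi * Complex.I * (r.val : ℂ) * (n.val : ℂ)) / (T : ℂ))

/-- Circular shift: `(shift t z) n = z (n + t)`. -/
def shift {T : ℕ} {α : Type*} (t : ZMod T) (z : ZMod T → α) : ZMod T → α :=
  fun n => z (n + t)

/-- The ℓ² norm `‖z‖₂ = √(∑ n, z n²)`. -/
noncomputable def l2norm {T : ℕ} [NeZero T] (z : ZMod T → ℝ) : ℝ :=
  Real.sqrt (∑ n : ZMod T, (z n) ^ 2)

/-- Normalization `N(z) = z / ‖z‖₂` for `z ≠ 0`, and `N(0) = 0`. -/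
noncomputable def nmlz {T : ℕ} [NeZero T] (z : ZMod T → ℝ) : ZMod T → ℝ :=
  if z = 0 then 0 else fun n => z n / l2norm z

/-- The concrete spectral feature map `Φ(z) r = |dft (N z) r|`. -/
noncomputable def Phi {T : ℕ} [NeZero T] (z : ZMod T → ℝ) : ZMod T → ℝ :=
  fun r => ‖dft (fun n => ((nmlz z n : ℝ) : ℂ)) r‖

/-- The time-shift–and–gain action `act (t, λ) z = λ • τ_t z`. -/
noncomputable def act {T : ℕ} (p : ZMod T × {l : ℝ // 0 < l}) (z : ZMod T → ℝ) :
    ZMod T → ℝ :=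
  (p.2 : ℝ) • shift p.1 z

instance {T : ℕ} : MeasurableSpace (ZMod T) := ⊤

open scoped ZMod

namespace ZMod

variable {N : ℕ} [NeZero N]

lemma dft_comp_add_right {E : Type*} [AddCommGroup E] [Module ℂ E] (Φ : ZMod N → E)
    (t k : ZMod N) : 𝓕 (fun j ↦ Φ (j + t)) k = stdAddChar (t * k) • 𝓕 Φ k := by
  simp only [dft_apply, Finset.smul_sum, smul_smul]
  refine Fintype.sum_equiv (Equiv.addRight t) _ _ fun j ↦ ?_
  rw [Equiv.coe_addRight, ← AddChar.map_add_eq_mul]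
  congr 2
  ring

lemma norm_dft_comp_add_right {E : Type*} [SeminormedAddCommGroup E] [NormedSpace ℂ E]
    (Φ : ZMod N → E) (t k : ZMod N) : ‖𝓕 (fun j ↦ Φ (j + t)) k‖ = ‖𝓕 Φ k‖ := by
  rw [dft_comp_add_right, norm_smul, stdAddChar_apply, Circle.norm_coe, one_mul]

end ZMod

-- The exponent uses `r.val * n.val` rather than `(n * r).val`; they agree modulo `T`.
lemma dft_eq_zmod_dft {T : ℕ} [NeZero T] (z : ZMod T → ℂ) : dft z = 𝓕 z := by
  ext r
  refine Fintype.sum_congr _ _ fun n ↦ ?_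
  have hcast : -(n * r) = (((-(n.val * r.val : ℤ)) : ℤ) : ZMod T) := by simp
  rw [hcast, ZMod.stdAddChar_coe, smul_eq_mul, mul_comm]
  congr 2
  push_cast
  ring

section

variable {T : ℕ}

lemma shift_eq_zero_iff {α : Type*} [Zero α] {t : ZMod T} {z : ZMod T → α} :
    shift t z = 0 ↔ z = 0 :=
  ⟨fun h ↦ funext fun n ↦ by simpa [shift] using congrFun h (n - t), by rintro rfl; rfl⟩

variable [NeZero T]

lemma l2norm_shift (t : ZMod T) (z : ZMod T → ℝ) : l2norm (shift t z) = l2norm z :=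
  congrArg Real.sqrt <| Equiv.sum_comp (Equiv.addRight t) fun n ↦ z n ^ 2

lemma l2norm_smul_of_nonneg {c : ℝ} (hc : 0 ≤ c) (z : ZMod T → ℝ) :
    l2norm (c • z) = c * l2norm z := by
  simp only [l2norm, Pi.smul_apply, smul_eq_mul, mul_pow, ← Finset.mul_sum]
  rw [Real.sqrt_mul (sq_nonneg c), Real.sqrt_sq hc]

lemma nmlz_shift (t : ZMod T) (z : ZMod T → ℝ) : nmlz (shift t z) = shift t (nmlz z) := by
  by_cases hz : z = 0
  · simp only [nmlz, hz, shift_eq_zero_iff, if_true]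
    rfl
  · ext n
    simp [nmlz, hz, shift_eq_zero_iff, shift, l2norm_shift]

lemma nmlz_smul_of_pos {c : ℝ} (hc : 0 < c) (z : ZMod T → ℝ) : nmlz (c • z) = nmlz z := by
  by_cases hz : z = 0
  · simp [hz]
  · ext n
    simp only [nmlz, smul_eq_zero, hc.ne', hz, or_self, if_false, Pi.smul_apply, smul_eq_mul,
      l2norm_smul_of_nonneg hc.le, mul_div_mul_left _ _ hc.ne']

lemma nmlz_act (p : ZMod T × {l : ℝ // 0 < l}) (z : ZMod T → ℝ) :
    nmlz (act p z) = shift p.1 (nmlz z) := by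
  rw [act, nmlz_smul_of_pos p.2.2, nmlz_shift]

lemma Phi_apply (z : ZMod T → ℝ) (r : ZMod T) : Phi z r = ‖𝓕 (fun n ↦ (nmlz z n : ℂ)) r‖ := by
  rw [Phi, dft_eq_zmod_dft]

lemma Phi_act (p : ZMod T × {l : ℝ // 0 < l}) (z : ZMod T → ℝ) : Phi (act p z) = Phi z := by
  ext r
  rw [Phi_apply, Phi_apply, nmlz_act]
  exact ZMod.norm_dft_comp_add_right (fun n ↦ (nmlz z n : ℂ)) p.1 r

end

lemma MeasureTheory.MeasurePreserving.lintegral_comp_of_aemeasurable {α β : Type*}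
    [MeasurableSpace α] [MeasurableSpace β] {μ : Measure α} {ν : Measure β} {g : α → β}
    (hg : MeasurePreserving g μ ν) {f : β → ENNReal} (hf : AEMeasurable f ν) :
    ∫⁻ a, f (g a) ∂μ = ∫⁻ b, f b ∂ν := by
  rw [← hg.map_eq] at hf ⊢
  exact (lintegral_map' hf hg.measurable.aemeasurable).symm

/-- Risk invariance of the concrete spectral representation: the perturbed risk
under time shifts and positive gains equals the unperturbed risk. -/
theorem risk_invariance_spectral {T : ℕ} [NeZero T] {Y : Type*} [MeasurableSpace Y]
    (D : Measure ((ZMod T → ℝ) × Y))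
    (μ : Measure (ZMod T × {l : ℝ // 0 < l})) [IsProbabilityMeasure μ]
    (g : (ZMod T → ℝ) × Y → ENNReal)
    (hg : AEMeasurable (fun p : (ZMod T → ℝ) × Y => g (Phi p.1, p.2)) D) :
    ∫⁻ q : ((ZMod T → ℝ) × Y) × (ZMod T × {l : ℝ // 0 < l}),
        g (Phi (act q.2 q.1.1), q.1.2) ∂(D.prod μ)
      = ∫⁻ p : (ZMod T → ℝ) × Y, g (Phi p.1, p.2) ∂D := by
  simp only [Phi_act]
  exact (measurePreserving_fst (μ := D) (ν := μ)).lintegral_comp_of_aemeasurable hg
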